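/- arXiv:math/0601611 — 4 statements merged into one kernel-verified Lean document; each statement's English description precedes it below -/
import Mathlib

section
/- Let x : ℝ^n → ℝ^n be a C² map such that |det ∇_y x(y)| ≥ C0 > 0 for all y ∈ ℝ^n and such that |∂_y^α x(y)| ≤ C for all y ∈ ℝ^n and all multi-indices α with |α| = 1 or |α| = 2. Then x is bijective from ℝ^n onto ℝ^n. -/
open MeasureTheory Real Filter Set

noncomputable section

/-- Euclidean space ℝⁿ. -/
abbrev Esp (n : ℕ) := EuclideanSpace ℝ (Fin n)

/-- `i`-th standard basis vector. -/
def evec (n : ℕ) (i : Fin n) : Esp n := EuclideanSpace.single i 1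

/-- Partial derivative in the `i`-th coordinate direction. -/
def pd {n : ℕ} {F : Type*} [NormedAddCommGroup F] [NormedSpace ℝ F]
    (f : Esp n → F) (i : Fin n) (x : Esp n) : F :=
  fderiv ℝ f x (evec n i)

/-- Laplacian in the space variable. -/
def lap {n : ℕ} {F : Type*} [NormedAddCommGroup F] [NormedSpace ℝ F]
    (f : Esp n → F) (x : Esp n) : F :=
  ∑ i, pd (fun y => pd f i y) i x

/-- `∇φ·∇a` for a real-valued `φ` and a complex-valued `a` (componentwise). -/
def gdotC {n : ℕ} (φ : Esp n → ℝ) (a : Esp n → ℂ) (x : Esp n) : ℂ :=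
  ∑ i, ((pd φ i x : ℝ) : ℂ) * pd a i x

/-- `∇φ·∇ψ` for real-valued functions. -/
def gdotR {n : ℕ} (φ ψ : Esp n → ℝ) (x : Esp n) : ℝ :=
  ∑ i, pd φ i x * pd ψ i x

/-- Jacobian determinant of a map ℝⁿ → ℝⁿ. -/
def jacDet {n : ℕ} (g : Esp n → Esp n) (y : Esp n) : ℝ :=
  LinearMap.det ((fderiv ℝ g y) : Esp n →ₗ[ℝ] Esp n)

/-- Square of the Sobolev `H^s` norm (via iterated derivatives). -/
def HsNormSq {n : ℕ} {F : Type*} [NormedAddCommGroup F] [NormedSpace ℝ F]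
    (s : ℕ) (w : Esp n → F) : ℝ :=
  ∑ k ∈ Finset.range (s + 1), ∫ x, ‖iteratedFDeriv ℝ k w x‖ ^ 2

/-- Sobolev `H^s` norm. -/
def HsNorm {n : ℕ} {F : Type*} [NormedAddCommGroup F] [NormedSpace ℝ F]
    (s : ℕ) (w : Esp n → F) : ℝ :=
  Real.sqrt (HsNormSq s w)

/-- Membership in the Sobolev space `H^s`. -/
def InHs {n : ℕ} {F : Type*} [NormedAddCommGroup F] [NormedSpace ℝ F]
    (s : ℕ) (w : Esp n → F) : Prop :=
  ContDiff ℝ s w ∧ ∀ k ≤ s, Integrable (fun x => ‖iteratedFDeriv ℝ k w x‖ ^ 2)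

/-- Membership in `H^s` for all `s` (i.e. in `H^∞`). -/
def InHinf {n : ℕ} {F : Type*} [NormedAddCommGroup F] [NormedSpace ℝ F]
    (w : Esp n → F) : Prop :=
  ContDiff ℝ (⊤ : ℕ∞) w ∧ ∀ s : ℕ, InHs s w

/-- `t ↦ a t` is continuous with values in `H^s` on `[0,T]`. -/
def ContHs {n : ℕ} {F : Type*} [NormedAddCommGroup F] [NormedSpace ℝ F]
    (T : ℝ) (s : ℕ) (a : ℝ → Esp n → F) : Prop :=
  (∀ t ∈ Icc (0:ℝ) T, InHs s (a t)) ∧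
  ∀ t₀ ∈ Icc (0:ℝ) T, Tendsto (fun t => HsNorm s (fun x => a t x - a t₀ x))
    (nhdsWithin t₀ (Icc (0:ℝ) T)) (nhds 0)

/-- The `L² ∩ L^∞` norm. -/
def L2LinfNorm {n : ℕ} {F : Type*} [NormedAddCommGroup F] [NormedSpace ℝ F]
    (w : Esp n → F) : ℝ :=
  (eLpNorm w 2 volume).toReal + (eLpNorm w ⊤ volume).toReal

/-- Smoothness on the time slab `[0,T] × ℝⁿ`. -/
def SmoothOnSlab {n : ℕ} {F : Type*} [NormedAddCommGroup F] [NormedSpace ℝ F]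
    (T : ℝ) (u : ℝ → Esp n → F) : Prop :=
  ContDiffOn ℝ (⊤ : ℕ∞) (fun p : ℝ × Esp n => u p.1 p.2) (Icc (0:ℝ) T ×ˢ univ)

/-- All spatial derivatives of `φ` of order `≥ 2` are bounded on `[0,T] × ℝⁿ`. -/
def SubquadSlab {n : ℕ} (T : ℝ) (φ : ℝ → Esp n → ℝ) : Prop :=
  ∀ k : ℕ, 2 ≤ k → ∃ C, ∀ t ∈ Icc (0:ℝ) T, ∀ x, ‖iteratedFDeriv ℝ k (φ t) x‖ ≤ C

/-- Geometrical assumption: smooth subquadratic potential and initial phase. -/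
structure GeomAssump (n : ℕ) (V : ℝ → Esp n → ℝ) (φ0 : Esp n → ℝ) : Prop where
  smoothV : ContDiff ℝ (⊤ : ℕ∞) (fun p : ℝ × Esp n => V p.1 p.2)
  subquadV : ∀ k : ℕ, 2 ≤ k → ∀ R > (0:ℝ), ∃ C, ∀ t : ℝ, |t| ≤ R → ∀ x,
    ‖iteratedFDeriv ℝ k (V t) x‖ ≤ C
  smoothφ0 : ContDiff ℝ (⊤ : ℕ∞) φ0
  subquadφ0 : ∀ k : ℕ, 2 ≤ k → ∃ C, ∀ x, ‖iteratedFDeriv ℝ k φ0 x‖ ≤ C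

/-- `φ` is a smooth solution on `[0,T] × ℝⁿ` of the eikonal equation
`∂_t φ + (1/2)|∇φ|² + V = 0`, `φ(0,·) = φ0`. -/
structure IsEikSol {n : ℕ} (V : ℝ → Esp n → ℝ) (φ0 : Esp n → ℝ)
    (T : ℝ) (φ : ℝ → Esp n → ℝ) : Prop where
  smooth : SmoothOnSlab T φ
  eq : ∀ t ∈ Icc (0:ℝ) T, ∀ x,
    deriv (fun s => φ s x) t + (1/2) * gdotR (φ t) (φ t) x + V t x = 0
  init : ∀ x, φ 0 x = φ0 x

/-- The Hamiltonian flow of `H = τ + |ξ|²/2 + V(t,x)` issued from `(y, ∇φ0(y))`. -/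
structure IsHamFlow {n : ℕ} (V : ℝ → Esp n → ℝ) (φ0 : Esp n → ℝ)
    (X Ξ : ℝ → Esp n → Esp n) : Prop where
  init_x : ∀ y, X 0 y = y
  init_xi : ∀ y, Ξ 0 y = gradient φ0 y
  dx : ∀ t y, HasDerivAt (fun s => X s y) (Ξ t y) t
  dxi : ∀ t y, HasDerivAt (fun s => Ξ s y) (-(gradient (V t) (X t y))) t

/-- Analytical assumption: smooth nonlinearity, initial amplitudes converging in every `H^s`. -/
structure AnalAssump (n : ℕ) (f : ℝ → ℝ) (a0e : ℝ → Esp n → ℂ) (a0 : Esp n → ℂ) : Prop where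
  smoothf : ContDiff ℝ (⊤ : ℕ∞) f
  a0_Hinf : InHinf a0
  conv : ∀ s : ℕ, Tendsto (fun ε => HsNorm s (fun x => a0e ε x - a0 x))
    (nhdsWithin 0 (Ioi 0)) (nhds 0)



lemma coord_abs_le_norm {n : ℕ} (v : Esp n) (i : Fin n) : |v i| ≤ ‖v‖ := by
  rw [EuclideanSpace.norm_eq, ← Real.sqrt_sq_eq_abs]
  apply Real.sqrt_le_sqrt
  have : |v i| ^ 2 ≤ ∑ j, ‖v j‖ ^ 2 := by
    refine Finset.single_le_sum (f := fun j => ‖v j‖ ^ 2) (fun j _ => by positivity)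
      (Finset.mem_univ i) |>.trans_eq' ?_
    rw [Real.norm_eq_abs]
  simpa [sq_abs] using this

lemma norm_le_sum_abs {n : ℕ} (v : Esp n) : ‖v‖ ≤ ∑ i, |v i| := by
  classical
  have hv : v = ∑ i, (v i) • (EuclideanSpace.basisFun (Fin n) ℝ).toBasis i := by
    have := (EuclideanSpace.basisFun (Fin n) ℝ).toBasis.sum_repr v
    simpa using this.symm
  calc ‖v‖ = ‖∑ i, (v i) • (EuclideanSpace.basisFun (Fin n) ℝ).toBasis i‖ := by rw [← hv]
    _ ≤ ∑ i, ‖(v i) • (EuclideanSpace.basisFun (Fin n) ℝ).toBasis i‖ := norm_sum_le _ _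
    _ = ∑ i, |v i| := by
        refine Finset.sum_congr rfl fun i _ => ?_
        rw [norm_smul, Real.norm_eq_abs, OrthonormalBasis.coe_toBasis,
          EuclideanSpace.basisFun_apply, EuclideanSpace.norm_single, norm_one, mul_one]

open Matrix in
lemma inv_bound {n : ℕ} (T : Esp n →L[ℝ] Esp n) {C0 C' : ℝ} (h0 : 0 < C0) (h1 : 1 ≤ C')
    (hdet : C0 ≤ |LinearMap.det (T : Esp n →ₗ[ℝ] Esp n)|) (hT : ‖T‖ ≤ C') (h : Esp n) :
    ‖h‖ ≤ (((n : ℝ)^2 * n.factorial * C' ^ n) / C0) * ‖T h‖ := by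
  classical
  set b := (EuclideanSpace.basisFun (Fin n) ℝ).toBasis with hb
  set A := LinearMap.toMatrix b b (T : Esp n →ₗ[ℝ] Esp n) with hA
  have hrepr : ∀ (w : Esp n) (i : Fin n), b.repr w i = w i := fun w i => by
    rw [hb, OrthonormalBasis.coe_toBasis_repr_apply, EuclideanSpace.basisFun_repr]
  have hbj : ∀ j, ‖b j‖ = 1 := fun j => by
    rw [hb, OrthonormalBasis.coe_toBasis, EuclideanSpace.basisFun_apply,
      EuclideanSpace.norm_single, norm_one]
  have hAentry : ∀ i j, |A i j| ≤ C' := by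
    intro i j
    rw [hA, LinearMap.toMatrix_apply, hrepr]
    calc |(T (b j)) i| ≤ ‖T (b j)‖ := coord_abs_le_norm _ _
      _ ≤ ‖T‖ * ‖b j‖ := T.le_opNorm _
      _ ≤ C' := by rw [hbj, mul_one]; exact hT
  have hC'0 : (0:ℝ) ≤ C' := le_trans zero_le_one h1
  have hadj : ∀ i j, |A.adjugate i j| ≤ (n.factorial : ℝ) * C' ^ n := by
    intro i j
    rw [Matrix.adjugate_apply]
    have hx : ∀ i' j', |(A.updateRow j (Pi.single i 1)) i' j'| ≤ C' := by
      intro i' j'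
      rcases eq_or_ne i' j with rfl | hne
      · rw [Matrix.updateRow_self]
        rcases eq_or_ne j' i with rfl | hne'
        · simpa [Pi.single_apply] using h1
        · simpa [Pi.single_apply, hne'] using hC'0
      · rw [Matrix.updateRow_ne hne]; exact hAentry _ _
    have := Matrix.det_le (A := A.updateRow j (Pi.single i 1))
      (abv := AbsoluteValue.abs) (x := C') (fun i' j' => hx i' j')
    simpa [Fintype.card_fin, nsmul_eq_mul] using this
  -- key identity
  have hAdet : A.det = LinearMap.det (T : Esp n →ₗ[ℝ] Esp n) := LinearMap.det_toMatrix b _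
  have hmv : A *ᵥ (fun j => h j) = fun i => (T h) i := by
    have := LinearMap.toMatrix_mulVec_repr b b (T : Esp n →ₗ[ℝ] Esp n) h
    funext i
    have h2 : (⇑(b.repr h) : Fin n → ℝ) = fun j => h j := funext fun j => hrepr h j
    rw [← hA] at this
    calc (A *ᵥ fun j => h j) i = (A *ᵥ ⇑(b.repr h)) i := by rw [h2]
      _ = b.repr ((T : Esp n →ₗ[ℝ] Esp n) h) i := by rw [this]
      _ = (T h) i := hrepr _ i
  have hkey : ∀ i, A.det * h i = ∑ j, A.adjugate i j * (T h) j := by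
    intro i
    have : (A.adjugate * A) *ᵥ (fun j => h j) = A.det • fun j => h j := by
      rw [Matrix.adjugate_mul, Matrix.smul_mulVec, Matrix.one_mulVec]
    have h3 : A.adjugate *ᵥ (A *ᵥ fun j => h j) = A.det • fun j => h j := by
      rw [Matrix.mulVec_mulVec]; exact this
    rw [hmv] at h3
    have := congrFun h3 i
    simp only [Pi.smul_apply, smul_eq_mul] at this
    rw [← this, Matrix.mulVec, dotProduct]
  -- assemble
  have hTh : ∀ j, |(T h) j| ≤ ‖T h‖ := fun j => coord_abs_le_norm _ _
  have chain : C0 * ‖h‖ ≤ ((n:ℝ)^2 * n.factorial * C' ^ n) * ‖T h‖ := by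
    calc C0 * ‖h‖ ≤ |A.det| * ‖h‖ := by
          apply mul_le_mul_of_nonneg_right _ (norm_nonneg _)
          rw [hAdet]; exact hdet
      _ = ‖A.det • h‖ := by rw [norm_smul, Real.norm_eq_abs]
      _ ≤ ∑ i, |(A.det • h) i| := norm_le_sum_abs _
      _ = ∑ i : Fin n, |∑ j, A.adjugate i j * (T h) j| := by
          refine Finset.sum_congr rfl fun i _ => ?_
          rw [PiLp.smul_apply, smul_eq_mul, hkey]
      _ ≤ ∑ i : Fin n, ∑ j, |A.adjugate i j * (T h) j| :=
          Finset.sum_le_sum fun i _ => Finset.abs_sum_le_sum_abs _ _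
      _ ≤ ∑ _i : Fin n, ∑ _j : Fin n, ((n.factorial : ℝ) * C' ^ n) * ‖T h‖ := by
          refine Finset.sum_le_sum fun i _ => Finset.sum_le_sum fun j _ => ?_
          rw [abs_mul]
          exact mul_le_mul (hadj i j) (hTh j) (abs_nonneg _) (by positivity)
      _ = ((n:ℝ)^2 * n.factorial * C' ^ n) * ‖T h‖ := by
          simp [Finset.sum_const, Fintype.card_fin]; ring
  rw [div_mul_eq_mul_div, le_div_iff₀ h0]
  linarith [chain]

set_option maxHeartbeats 2000000 in
/-- **Global inversion.** A `C²` map `x : ℝⁿ → ℝⁿ` whose Jacobian determinant is bounded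
below in absolute value by `C0 > 0` and whose derivatives of order `1` and `2` are bounded
by `C` is a bijection of `ℝⁿ`. -/
theorem stmt2 {n : ℕ} (x : Esp n → Esp n) (C0 C : ℝ) (hC0 : 0 < C0)
    (hx : ContDiff ℝ 2 x)
    (hdet : ∀ y, C0 ≤ |jacDet x y|)
    (hbd : ∀ y, ∀ k : ℕ, k = 1 ∨ k = 2 → ‖iteratedFDeriv ℝ k x y‖ ≤ C) :
    Function.Bijective x := by
  classical
  set C' : ℝ := max C 1 with hC'def
  have hC'1 : (1:ℝ) ≤ C' := le_max_right _ _
  have hC'0 : (0:ℝ) < C' := lt_of_lt_of_le one_pos hC'1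
  have hf1 : Differentiable ℝ x := hx.differentiable (by norm_num)
  have hD1 : ∀ y, ‖fderiv ℝ x y‖ ≤ C' := by
    intro y
    have h := norm_iteratedFDeriv_fderiv (𝕜 := ℝ) (f := x) (x := y) (n := 0)
    rw [norm_iteratedFDeriv_zero] at h
    rw [h]
    exact le_trans (hbd y 1 (Or.inl rfl)) (le_max_left _ _)
  have hDf_cd : ContDiff ℝ 1 (fderiv ℝ x) := hx.fderiv_right (m := 1) le_rfl
  have hDf_diff : Differentiable ℝ (fderiv ℝ x) := hDf_cd.differentiable (by norm_num)
  have hD2 : ∀ y, ‖fderiv ℝ (fderiv ℝ x) y‖ ≤ C' := by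
    intro y
    have h := norm_iteratedFDeriv_fderiv (𝕜 := ℝ) (f := fderiv ℝ x) (x := y) (n := 0)
    rw [norm_iteratedFDeriv_zero] at h
    have h2 := norm_iteratedFDeriv_fderiv (𝕜 := ℝ) (f := x) (x := y) (n := 1)
    rw [h, h2]
    exact le_trans (hbd y 2 (Or.inr rfl)) (le_max_left _ _)
  have hDlip : ∀ u v : Esp n, ‖fderiv ℝ x u - fderiv ℝ x v‖ ≤ C' * ‖u - v‖ := by
    intro u v
    exact Convex.norm_image_sub_le_of_norm_hasFDerivWithin_le
      (fun z _ => (hDf_diff z).hasFDerivAt.hasFDerivWithinAt)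
      (fun z _ => hD2 z) convex_univ (mem_univ v) (mem_univ u)
  have hLip : ∀ u v : Esp n, ‖x u - x v‖ ≤ C' * ‖u - v‖ := by
    intro u v
    exact Convex.norm_image_sub_le_of_norm_hasFDerivWithin_le
      (fun z _ => (hf1 z).hasFDerivAt.hasFDerivWithinAt)
      (fun z _ => hD1 z) convex_univ (mem_univ v) (mem_univ u)
  set M : ℝ := max (((n : ℝ)^2 * n.factorial * C' ^ n) / C0) 1 with hMdef
  have hM1 : (1:ℝ) ≤ M := le_max_right _ _
  have hM0 : (0:ℝ) < M := lt_of_lt_of_le one_pos hM1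
  have hM : ∀ y (h : Esp n), ‖h‖ ≤ M * ‖fderiv ℝ x y h‖ := by
    intro y h
    refine le_trans (inv_bound (fderiv ℝ x y) hC0 hC'1 (hdet y) (hD1 y) h) ?_
    exact mul_le_mul_of_nonneg_right (le_max_left _ _) (norm_nonneg _)
  set r : ℝ := 1 / (2 * M * C') with hrdef
  have hr0 : 0 < r := by positivity
  set ε : ℝ := 1 / (2 * M) with hεdef
  have hε0 : 0 < ε := by positivity
  have hC'r : C' * r = ε := by
    rw [hrdef, hεdef, mul_one_div, div_eq_div_iff (by positivity) (by positivity)]; ring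
  -- Taylor estimate
  have key : ∀ p u v : Esp n, u ∈ Metric.closedBall p r → v ∈ Metric.closedBall p r →
      ‖x u - x v - fderiv ℝ x p (u - v)‖ ≤ (C' * r) * ‖u - v‖ := by
    intro p u v hu hv
    have := Convex.norm_image_sub_le_of_norm_hasFDerivWithin_le
      (f := fun z => x z - fderiv ℝ x p z)
      (f' := fun z => fderiv ℝ x z - fderiv ℝ x p)
      (s := Metric.closedBall p r)
      (fun z _ => ((hf1 z).hasFDerivAt.sub ((fderiv ℝ x p).hasFDerivAt)).hasFDerivWithinAt)
      (fun z hz => by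
        calc ‖fderiv ℝ x z - fderiv ℝ x p‖ ≤ C' * ‖z - p‖ := hDlip z p
          _ ≤ C' * r := by
              apply mul_le_mul_of_nonneg_left _ (le_of_lt hC'0)
              rw [← dist_eq_norm]; exact hz)
      (convex_closedBall p r) hv hu
    calc ‖x u - x v - fderiv ℝ x p (u - v)‖
        = ‖(x u - fderiv ℝ x p u) - (x v - fderiv ℝ x p v)‖ := by
          rw [map_sub]; congr 1; abel
      _ ≤ (C' * r) * ‖u - v‖ := this
  -- (A) local antilipschitz
  have hA : ∀ u v : Esp n, ‖u - v‖ ≤ r → ε * ‖u - v‖ ≤ ‖x u - x v‖ := by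
    intro u v huv
    have h1 : ‖u - v‖ ≤ M * ‖fderiv ℝ x u (u - v)‖ := hM u _
    have h2 : ‖x u - x v - fderiv ℝ x u (u - v)‖ ≤ (C' * r) * ‖u - v‖ := by
      apply key u u v (Metric.mem_closedBall_self (le_of_lt hr0))
      rw [Metric.mem_closedBall, dist_eq_norm]
      rw [← norm_neg]; simpa [neg_sub] using huv
    have h3 : ‖fderiv ℝ x u (u - v)‖ - ‖x u - x v - fderiv ℝ x u (u - v)‖ ≤ ‖x u - x v‖ := by
      have := norm_sub_norm_le (fderiv ℝ x u (u - v)) (fderiv ℝ x u (u - v) - (x u - x v))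
      calc ‖fderiv ℝ x u (u - v)‖ - ‖x u - x v - fderiv ℝ x u (u - v)‖
          ≤ ‖fderiv ℝ x u (u - v) - (fderiv ℝ x u (u - v) - (x u - x v))‖ := by
            rw [← norm_neg (x u - x v - fderiv ℝ x u (u - v))]; simpa [neg_sub] using this
        _ = ‖x u - x v‖ := by congr 1; abel
    have h4 : (1 / M) * ‖u - v‖ ≤ ‖fderiv ℝ x u (u - v)‖ := by
      rw [div_mul_eq_mul_div, one_mul, div_le_iff₀ hM0, mul_comm]
      exact h1
    have h5 : (1:ℝ) / M = 2 * ε := by rw [hεdef]; field_simp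
    rw [h5] at h4
    rw [hC'r] at h2
    linarith [h2, h3, h4, norm_nonneg (u - v)]
  -- (B) local inverse
  set ρ : ℝ := r / (8 * M) with hρdef
  have hρ0 : 0 < ρ := by positivity
  have hB : ∀ p y : Esp n, ‖y - x p‖ ≤ ρ → ∃ z, ‖z - p‖ ≤ r / 4 ∧ x z = y := by
    intro p y hy
    have hdet' : (fderiv ℝ x p).det ≠ 0 := by
      intro h0
      have := hdet p
      rw [jacDet] at this
      have : C0 ≤ |(fderiv ℝ x p).det| := this
      rw [h0] at this
      simp at this
      linarith
    set e := (fderiv ℝ x p).toContinuousLinearEquivOfDetNeZero hdet' with hedef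
    have he : ∀ w, e w = fderiv ℝ x p w := fun w =>
      ContinuousLinearMap.toContinuousLinearEquivOfDetNeZero_apply _ hdet' w
    have hesymm : ∀ w, ‖e.symm w‖ ≤ M * ‖w‖ := by
      intro w
      have h1 := hM p (e.symm w)
      rwa [← he, e.apply_symm_apply] at h1
    set Φ : Esp n → Esp n := fun u => u + e.symm (y - x u) with hΦdef
    have hΦfix : ∀ z, Φ z = z → x z = y := by
      intro z hz
      have h1 : e.symm (y - x z) = 0 := by
        have := hz
        rw [hΦdef] at this
        simpa using (add_eq_left.mp this)
      have h2 : y - x z = 0 := by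
        have := congrArg e h1
        rwa [e.apply_symm_apply, map_zero] at this
      exact (sub_eq_zero.mp h2).symm
    -- derivative of Φ
    set Φ' : Esp n → (Esp n →L[ℝ] Esp n) := fun u =>
      (e.symm : Esp n →L[ℝ] Esp n).comp (fderiv ℝ x p - fderiv ℝ x u) with hΦ'def
    have hΦderiv : ∀ u : Esp n, HasFDerivAt Φ (Φ' u) u := by
      intro u
      have h1 : HasFDerivAt (fun u : Esp n => y - x u) (-(fderiv ℝ x u)) u := by
        have := (hasFDerivAt_const y u).sub (hf1 u).hasFDerivAt
        rwa [zero_sub] at this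
      have h2 : HasFDerivAt (fun u : Esp n => e.symm (y - x u))
          ((e.symm : Esp n →L[ℝ] Esp n).comp (-(fderiv ℝ x u))) u :=
        (e.symm : Esp n →L[ℝ] Esp n).hasFDerivAt.comp u h1
      have h3 := (hasFDerivAt_id u).add h2
      refine h3.congr_fderiv ?_
      refine ContinuousLinearMap.ext fun w => ?_
      have hw : e.symm (fderiv ℝ x p w) = w := by
        rw [← he w, e.symm_apply_apply]
      simp only [hΦ'def, ContinuousLinearMap.coe_comp', Function.comp_apply,
        ContinuousLinearMap.add_apply, ContinuousLinearMap.coe_id', id_eq,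
        ContinuousLinearMap.sub_apply, ContinuousLinearMap.neg_apply, map_sub, map_neg,
        ContinuousLinearEquiv.coe_coe, hw]
      abel
    have hΦ'bd : ∀ u ∈ Metric.closedBall p r, ‖Φ' u‖ ≤ (1:ℝ)/2 := by
      intro u hu
      rw [hΦ'def]
      refine ContinuousLinearMap.opNorm_le_bound _ (by norm_num) fun w => ?_
      calc ‖((e.symm : Esp n →L[ℝ] Esp n).comp (fderiv ℝ x p - fderiv ℝ x u)) w‖
          = ‖e.symm ((fderiv ℝ x p - fderiv ℝ x u) w)‖ := rfl
        _ ≤ M * ‖(fderiv ℝ x p - fderiv ℝ x u) w‖ := hesymm _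
        _ ≤ M * (‖fderiv ℝ x p - fderiv ℝ x u‖ * ‖w‖) := by
            apply mul_le_mul_of_nonneg_left _ (le_of_lt hM0)
            exact (fderiv ℝ x p - fderiv ℝ x u).le_opNorm w
        _ ≤ M * ((C' * r) * ‖w‖) := by
            apply mul_le_mul_of_nonneg_left _ (le_of_lt hM0)
            apply mul_le_mul_of_nonneg_right _ (norm_nonneg w)
            calc ‖fderiv ℝ x p - fderiv ℝ x u‖ ≤ C' * ‖p - u‖ := hDlip p u
              _ ≤ C' * r := by
                  apply mul_le_mul_of_nonneg_left _ (le_of_lt hC'0)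
                  rw [← dist_eq_norm, dist_comm]; exact hu
        _ = (M * (C' * r)) * ‖w‖ := by ring
        _ ≤ ((1:ℝ)/2) * ‖w‖ := by
            apply mul_le_mul_of_nonneg_right _ (norm_nonneg w)
            rw [hC'r, hεdef]
            rw [mul_one_div]
            rw [div_le_div_iff₀ (by positivity) (by norm_num)]
            ring_nf
            linarith [hM0]
    have hpair : ∀ u ∈ Metric.closedBall p r, ∀ v ∈ Metric.closedBall p r,
        ‖Φ u - Φ v‖ ≤ (1/2 : ℝ) * ‖u - v‖ :=
      fun u hu v hv => Convex.norm_image_sub_le_of_norm_hasFDerivWithin_le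
        (fun z _ => (hΦderiv z).hasFDerivWithinAt) (fun z hz => hΦ'bd z hz)
        (convex_closedBall p r) hv hu
    have hΦp : ‖Φ p - p‖ ≤ r / 8 := by
      have : Φ p - p = e.symm (y - x p) := by
        simp only [hΦdef]; rw [add_sub_cancel_left]
      rw [this]
      calc ‖e.symm (y - x p)‖ ≤ M * ‖y - x p‖ := hesymm _
        _ ≤ M * ρ := mul_le_mul_of_nonneg_left hy (le_of_lt hM0)
        _ = r / 8 := by rw [hρdef]; field_simp
    have hmaps : MapsTo Φ (Metric.closedBall p r) (Metric.closedBall p r) := by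
      intro u hu
      rw [Metric.mem_closedBall, dist_eq_norm]
      calc ‖Φ u - p‖ ≤ ‖Φ u - Φ p‖ + ‖Φ p - p‖ := by
            have : Φ u - p = (Φ u - Φ p) + (Φ p - p) := by abel
            rw [this]; exact norm_add_le _ _
        _ ≤ (1/2 : ℝ) * ‖u - p‖ + r / 8 :=
            add_le_add (hpair u hu p (Metric.mem_closedBall_self (le_of_lt hr0))) hΦp
        _ ≤ (1/2 : ℝ) * r + r / 8 := by
            have : ‖u - p‖ ≤ r := by rw [← dist_eq_norm]; exact hu
            linarith
        _ ≤ r := by linarith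
    have hlipOn : LipschitzOnWith (1/2 : NNReal) Φ (Metric.closedBall p r) := by
      apply LipschitzOnWith.of_dist_le_mul
      intro u hu v hv
      rw [dist_eq_norm, dist_eq_norm]
      have hc : ((1/2 : NNReal) : ℝ) = 1/2 := by norm_num
      rw [hc]
      exact hpair u hu v hv
    have hcontr : ContractingWith (1/2 : NNReal) (hmaps.restrict Φ _ _) := by
      constructor
      · exact NNReal.coe_lt_coe.mp (by norm_num)
      · exact LipschitzOnWith.to_restrict hlipOn
    obtain ⟨z, hzmem, hzfix, -, -⟩ := hcontr.exists_fixedPoint'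
      (Metric.isClosed_closedBall.isComplete) hmaps
      (Metric.mem_closedBall_self (le_of_lt hr0)) (edist_ne_top _ _)
    refine ⟨z, ?_, hΦfix z hzfix⟩
    have hza : ‖z - p‖ ≤ (1/2 : ℝ) * ‖z - p‖ + r / 8 := by
      calc ‖z - p‖ = ‖(Φ z - Φ p) + (Φ p - p)‖ := by
            rw [show Φ z = z from hzfix]; congr 1; abel
        _ ≤ ‖Φ z - Φ p‖ + ‖Φ p - p‖ := norm_add_le _ _
        _ ≤ (1/2 : ℝ) * ‖z - p‖ + r / 8 :=
            add_le_add (hpair z hzmem p (Metric.mem_closedBall_self (le_of_lt hr0))) hΦp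
    linarith [hza]
  -- total local inverse function g
  have hgex : ∀ p y : Esp n, ∃ z : Esp n,
      ‖y - x p‖ ≤ ρ → (‖z - p‖ ≤ r / 4 ∧ x z = y) := by
    intro p y
    by_cases h : ‖y - x p‖ ≤ ρ
    · obtain ⟨z, hz⟩ := hB p y h
      exact ⟨z, fun _ => hz⟩
    · exact ⟨p, fun h' => absurd h' h⟩
  choose g hg using hgex
  have hN0' : True := trivial
  constructor
  · -- injective
    intro a b hab
    by_cases hab0 : a = b
    · exact hab0
    set L : ℝ := ‖b - a‖ with hLdef
    have hL0 : 0 < L := norm_pos_iff.mpr (sub_ne_zero_of_ne fun h => hab0 h.symm)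
    set m : ℝ := min ρ (r/4) with hmdef
    have hm0 : 0 < m := lt_min hρ0 (by linarith [hr0])
    set N : ℕ := ⌈C' * L / m⌉₊ + 1 with hNdef
    have hNpos : (0:ℝ) < (N:ℝ) := by
      have : 0 < N := by rw [hNdef]; exact Nat.succ_pos _
      exact_mod_cast this
    have hNne : (N:ℝ) ≠ 0 := ne_of_gt hNpos
    have hstep : C' * L / (N:ℝ) ≤ m := by
      have h1 : C' * L / m ≤ (N:ℝ) := by
        refine le_trans (Nat.le_ceil _) ?_
        exact_mod_cast Nat.le_succ _
      rw [div_le_iff₀ hm0] at h1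
      rw [div_le_iff₀ hNpos]
      linarith
    set ℓ : ℝ → Esp n := fun t => a + t • (b - a) with hℓdef
    have hℓ0 : ℓ 0 = a := by simp [hℓdef]
    have hℓ1 : ℓ 1 = b := by simp [hℓdef]
    set q : Esp n := x a with hqdef
    set H : ℝ → ℝ → Esp n := fun t s => (1 - s) • x (ℓ t) + s • q with hHdef
    have hℓdiff : ∀ t t' : ℝ, ℓ t - ℓ t' = (t - t') • (b - a) := by
      intro t t'
      simp only [hℓdef]
      rw [add_sub_add_left_eq_sub, ← sub_smul]
    have hℓnorm : ∀ t t' : ℝ, ‖ℓ t - ℓ t'‖ = |t - t'| * L := by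
      intro t t'
      rw [hℓdiff, norm_smul, Real.norm_eq_abs, hLdef]
    have hHdiff_t : ∀ s ∈ Icc (0:ℝ) 1, ∀ t t' : ℝ,
        ‖H t s - H t' s‖ ≤ C' * (|t - t'| * L) := by
      intro s hs t t'
      have he : H t s - H t' s = (1 - s) • (x (ℓ t) - x (ℓ t')) := by
        simp only [hHdef]
        rw [add_sub_add_right_eq_sub, ← smul_sub]
      rw [he, norm_smul, Real.norm_eq_abs]
      obtain ⟨hs0, hs1⟩ := hs
      have h1 : |1 - s| ≤ 1 := abs_le.mpr ⟨by linarith, by linarith⟩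
      calc |1 - s| * ‖x (ℓ t) - x (ℓ t')‖ ≤ 1 * ‖x (ℓ t) - x (ℓ t')‖ :=
            mul_le_mul_of_nonneg_right h1 (norm_nonneg _)
        _ = ‖x (ℓ t) - x (ℓ t')‖ := one_mul _
        _ ≤ C' * ‖ℓ t - ℓ t'‖ := hLip _ _
        _ = C' * (|t - t'| * L) := by rw [hℓnorm]
    have hHdiff_s : ∀ t ∈ Icc (0:ℝ) 1, ∀ s s' : ℝ,
        ‖H t s - H t s'‖ ≤ |s - s'| * (C' * L) := by
      intro t ht s s'
      have he : H t s - H t s' = (s - s') • (q - x (ℓ t)) := by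
        simp only [hHdef]
        module
      rw [he, norm_smul, Real.norm_eq_abs]
      apply mul_le_mul_of_nonneg_left _ (abs_nonneg _)
      obtain ⟨ht0, ht1⟩ := ht
      calc ‖q - x (ℓ t)‖ = ‖x (ℓ 0) - x (ℓ t)‖ := by rw [hℓ0, ← hqdef]
        _ ≤ C' * ‖ℓ 0 - ℓ t‖ := hLip _ _
        _ = C' * (|0 - t| * L) := by rw [hℓnorm]
        _ ≤ C' * (1 * L) := by
            apply mul_le_mul_of_nonneg_left _ (le_of_lt hC'0)
            apply mul_le_mul_of_nonneg_right _ (le_of_lt hL0)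
            rw [zero_sub, abs_neg, abs_of_nonneg ht0]
            exact ht1
        _ = C' * L := by rw [one_mul]
    have hH0 : ∀ s : ℝ, H 0 s = q := by
      intro s
      simp only [hHdef, hℓ0, ← hqdef]
      rw [← add_smul]
      simp
    have hH1 : ∀ s : ℝ, H 1 s = q := by
      intro s
      simp only [hHdef, hℓ1]
      rw [show x b = q from hab.symm, ← add_smul]
      simp
    have hHs0 : ∀ t : ℝ, H t 0 = x (ℓ t) := by
      intro t; simp [hHdef]
    have hHs1 : ∀ t : ℝ, H t 1 = q := by
      intro t; simp [hHdef]
    -- the discrete lift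
    set P : ℝ → ℕ → Esp n := fun s k =>
      Nat.rec (motive := fun _ => Esp n) a
        (fun k pk => g pk (H (((k : ℝ) + 1) / (N:ℝ)) s)) k with hPdef
    have hP0 : ∀ s, P s 0 = a := fun s => rfl
    have hPsucc : ∀ s k, P s (k+1) = g (P s k) (H (((k:ℝ)+1)/(N:ℝ)) s) := fun s k => rfl
    have hcond : ∀ s ∈ Icc (0:ℝ) 1, ∀ k : ℕ, x (P s k) = H ((k:ℝ)/(N:ℝ)) s →
        ‖H (((k:ℝ)+1)/(N:ℝ)) s - x (P s k)‖ ≤ ρ := by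
      intro s hs k hxk
      rw [hxk]
      refine le_trans (hHdiff_t s hs _ _) ?_
      have habs : |((k:ℝ)+1)/(N:ℝ) - (k:ℝ)/(N:ℝ)| = 1/(N:ℝ) := by
        have he : ((k:ℝ)+1)/(N:ℝ) - (k:ℝ)/(N:ℝ) = 1/(N:ℝ) := by ring
        rw [he, abs_of_pos (one_div_pos.mpr hNpos)]
      rw [habs]
      calc C' * (1/(N:ℝ) * L) = C' * L / (N:ℝ) := by ring
        _ ≤ m := hstep
        _ ≤ ρ := min_le_left _ _
    have I1 : ∀ s ∈ Icc (0:ℝ) 1, ∀ k : ℕ, x (P s k) = H ((k:ℝ)/(N:ℝ)) s := by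
      intro s hs k
      induction k with
      | zero =>
        rw [hP0, show ((0:ℕ):ℝ)/(N:ℝ) = 0 by norm_num, hH0, hqdef]
      | succ k ih =>
        have hc := hcond s hs k ih
        have hgp := hg (P s k) (H (((k:ℝ)+1)/(N:ℝ)) s) hc
        rw [hPsucc, hgp.2]
        push_cast
        ring_nf
    have Istep : ∀ s ∈ Icc (0:ℝ) 1, ∀ k : ℕ, ‖P s (k+1) - P s k‖ ≤ r/4 := by
      intro s hs k
      have hc := hcond s hs k (I1 s hs k)
      have hgp := hg (P s k) (H (((k:ℝ)+1)/(N:ℝ)) s) hc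
      rw [hPsucc]
      exact hgp.1
    have h0Icc : (0:ℝ) ∈ Icc (0:ℝ) 1 := ⟨le_rfl, zero_le_one⟩
    have h1Icc : (1:ℝ) ∈ Icc (0:ℝ) 1 := ⟨zero_le_one, le_rfl⟩
    -- equality from equal images at close range
    have hEq : ∀ u v : Esp n, ‖u - v‖ ≤ r → x u = x v → u = v := by
      intro u v huv hxy
      have h1 := hA u v huv
      rw [hxy, sub_self, norm_zero] at h1
      have h2 : ‖u - v‖ = 0 := le_antisymm (by nlinarith [hε0]) (norm_nonneg _)
      exact sub_eq_zero.mp (norm_eq_zero.mp h2)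
    have I2 : ∀ k : ℕ, P 0 k = ℓ ((k:ℝ)/(N:ℝ)) := by
      intro k
      induction k with
      | zero =>
        rw [hP0, show ((0:ℕ):ℝ)/(N:ℝ) = 0 by norm_num, hℓ0]
      | succ k ih =>
        have hc := hcond 0 h0Icc k (I1 0 h0Icc k)
        have hgp := hg (P 0 k) (H (((k:ℝ)+1)/(N:ℝ)) 0) hc
        rw [hPsucc]
        set z := g (P 0 k) (H (((k:ℝ)+1)/(N:ℝ)) 0) with hzdef
        have hxz : x z = x (ℓ (((k:ℝ)+1)/(N:ℝ))) := by rw [hgp.2, hHs0]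
        have hLN : L / (N:ℝ) ≤ r/4 := by
          have h1 : L / (N:ℝ) ≤ C' * L / (N:ℝ) :=
            (div_le_div_iff_of_pos_right hNpos).mpr (le_mul_of_one_le_left hL0.le hC'1)
          exact le_trans h1 (le_trans hstep (min_le_right _ _))
        have hdist : ‖z - ℓ (((k:ℝ)+1)/(N:ℝ))‖ ≤ r := by
          have h1 : ‖z - P 0 k‖ ≤ r/4 := hgp.1
          have h2 : ‖P 0 k - ℓ (((k:ℝ)+1)/(N:ℝ))‖ ≤ r/4 := by
            rw [ih, hℓnorm]
            have habs : |(k:ℝ)/(N:ℝ) - ((k:ℝ)+1)/(N:ℝ)| = 1/(N:ℝ) := by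
              have he : (k:ℝ)/(N:ℝ) - ((k:ℝ)+1)/(N:ℝ) = -(1/(N:ℝ)) := by ring
              rw [he, abs_neg, abs_of_pos (one_div_pos.mpr hNpos)]
            rw [habs]
            calc 1/(N:ℝ) * L = L / (N:ℝ) := by ring
              _ ≤ r/4 := hLN
          have he : z - ℓ (((k:ℝ)+1)/(N:ℝ)) =
              (z - P 0 k) + (P 0 k - ℓ (((k:ℝ)+1)/(N:ℝ))) := by abel
          rw [he]
          refine le_trans (norm_add_le _ _) ?_
          linarith
        have := hEq z (ℓ (((k:ℝ)+1)/(N:ℝ))) hdist hxz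
        rw [this]
        push_cast
        ring_nf
    have I3 : ∀ k : ℕ, P 1 k = a := by
      intro k
      induction k with
      | zero => exact hP0 1
      | succ k ih =>
        have hc := hcond 1 h1Icc k (I1 1 h1Icc k)
        have hgp := hg (P 1 k) (H (((k:ℝ)+1)/(N:ℝ)) 1) hc
        rw [hPsucc]
        set z := g (P 1 k) (H (((k:ℝ)+1)/(N:ℝ)) 1) with hzdef
        have hxz : x z = x a := by rw [hgp.2, hHs1, hqdef]
        have hdist : ‖z - a‖ ≤ r := by
          have h1 : ‖z - P 1 k‖ ≤ r/4 := hgp.1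
          rw [ih] at h1
          linarith [hr0]
        exact hEq z a hdist hxz
    set η : ℝ := (ε * r / 4) / (C' * L + 1) with hηdef
    have hη0 : 0 < η := by positivity
    set δ : ℝ := η * (C' * L) with hδdef
    have hδ0 : 0 ≤ δ := by positivity
    have hδε : δ / ε ≤ r/4 := by
      have h1 : δ ≤ ε * r / 4 := by
        rw [hδdef, hηdef, div_mul_eq_mul_div, div_le_iff₀ (by positivity)]
        nlinarith [mul_pos hε0 hr0]
      rw [div_le_iff₀ hε0]
      calc δ ≤ ε * r / 4 := h1
        _ = r / 4 * ε := by ring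
    have I4 : ∀ s ∈ Icc (0:ℝ) 1, ∀ s' ∈ Icc (0:ℝ) 1, |s - s'| ≤ η →
        ∀ k : ℕ, k ≤ N → ‖P s k - P s' k‖ ≤ δ / ε := by
      intro s hs s' hs' hss' k
      induction k with
      | zero =>
        intro _
        rw [hP0, hP0, sub_self, norm_zero]
        positivity
      | succ k ih =>
        intro hk1
        have hk : k ≤ N := Nat.le_of_succ_le hk1
        have ihk := ih hk
        have hap : ‖P s (k+1) - P s' (k+1)‖ ≤ r := by
          have h1 := Istep s hs k
          have h2 := Istep s' hs' k
          have he : P s (k+1) - P s' (k+1) =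
              (P s (k+1) - P s k) + (P s k - P s' k) + (P s' k - P s' (k+1)) := by abel
          rw [he]
          refine le_trans (norm_add_le _ _) ?_
          refine le_trans (add_le_add (norm_add_le _ _) le_rfl) ?_
          rw [norm_sub_rev (P s' k)]
          linarith [hδε]
        have hAk := hA (P s (k+1)) (P s' (k+1)) hap
        have htIcc : ((k:ℝ)+1)/(N:ℝ) ∈ Icc (0:ℝ) 1 := by
          constructor
          · positivity
          · rw [div_le_one hNpos]
            have : ((k:ℝ)+1) ≤ (N:ℝ) := by exact_mod_cast hk1
            exact this
        have hHs := hHdiff_s (((k:ℝ)+1)/(N:ℝ)) htIcc s s'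
        have hx1 : x (P s (k+1)) = H (((k:ℝ)+1)/(N:ℝ)) s := by
          have := I1 s hs (k+1); push_cast at this ⊢; convert this using 3 <;> ring
        have hx2 : x (P s' (k+1)) = H (((k:ℝ)+1)/(N:ℝ)) s' := by
          have := I1 s' hs' (k+1); push_cast at this ⊢; convert this using 3 <;> ring
        rw [hx1, hx2] at hAk
        have hδb : ‖H (((k:ℝ)+1)/(N:ℝ)) s - H (((k:ℝ)+1)/(N:ℝ)) s'‖ ≤ δ := by
          refine le_trans hHs ?_
          rw [hδdef]
          exact mul_le_mul_of_nonneg_right hss' (by positivity)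
        rw [le_div_iff₀ hε0]
        calc ‖P s (k+1) - P s' (k+1)‖ * ε = ε * ‖P s (k+1) - P s' (k+1)‖ := by ring
          _ ≤ ‖H (((k:ℝ)+1)/(N:ℝ)) s - H (((k:ℝ)+1)/(N:ℝ)) s'‖ := hAk
          _ ≤ δ := hδb
    have I5 : ∀ s ∈ Icc (0:ℝ) 1, ∀ s' ∈ Icc (0:ℝ) 1, |s - s'| ≤ η → P s N = P s' N := by
      intro s hs s' hs' hss'
      have h1 := I4 s hs s' hs' hss' N le_rfl
      have hdist : ‖P s N - P s' N‖ ≤ r := by linarith [hδε, hr0]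
      have hxN : ∀ u ∈ Icc (0:ℝ) 1, x (P u N) = q := by
        intro u hu
        rw [I1 u hu N, show ((N:ℕ):ℝ)/(N:ℝ) = 1 from div_self hNne, hH1]
      exact hEq _ _ hdist ((hxN s hs).trans (hxN s' hs').symm)
    set K : ℕ := ⌈1/η⌉₊ + 1 with hKdef
    have hKpos : (0:ℝ) < (K:ℝ) := by
      have : 0 < K := by rw [hKdef]; exact Nat.succ_pos _
      exact_mod_cast this
    have hKne : (K:ℝ) ≠ 0 := ne_of_gt hKpos
    have hKη : 1/(K:ℝ) ≤ η := by
      have h1 : 1/η ≤ (K:ℝ) := by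
        refine le_trans (Nat.le_ceil _) ?_
        exact_mod_cast Nat.le_succ _
      rw [div_le_iff₀ hη0] at h1
      rw [div_le_iff₀ hKpos]
      linarith
    have chain : ∀ j : ℕ, j ≤ K → P ((j:ℝ)/(K:ℝ)) N = P 0 N := by
      intro j
      induction j with
      | zero =>
        intro _
        rw [show ((0:ℕ):ℝ)/(K:ℝ) = 0 by norm_num]
      | succ j ih =>
        intro hj1
        have hj : j ≤ K := Nat.le_of_succ_le hj1
        have hmem1 : ((j:ℝ)+1)/(K:ℝ) ∈ Icc (0:ℝ) 1 := by
          constructor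
          · positivity
          · rw [div_le_one hKpos]; exact_mod_cast hj1
        have hmem2 : (j:ℝ)/(K:ℝ) ∈ Icc (0:ℝ) 1 := by
          constructor
          · positivity
          · rw [div_le_one hKpos]
            have : (j:ℝ) ≤ (K:ℝ) := by exact_mod_cast hj
            linarith
        have habs : |((j:ℝ)+1)/(K:ℝ) - (j:ℝ)/(K:ℝ)| ≤ η := by
          have he : ((j:ℝ)+1)/(K:ℝ) - (j:ℝ)/(K:ℝ) = 1/(K:ℝ) := by ring
          rw [he, abs_of_pos (one_div_pos.mpr hKpos)]
          exact hKη
        have hstep2 := I5 _ hmem1 _ hmem2 habs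
        rw [show (((j+1 : ℕ)):ℝ) = (j:ℝ)+1 from by push_cast; ring]
        exact hstep2.trans (ih hj)
    have hfin : P 1 N = P 0 N := by
      have := chain K le_rfl
      rwa [div_self hKne] at this
    calc a = P 1 N := (I3 N).symm
      _ = P 0 N := hfin
      _ = ℓ ((N:ℝ)/(N:ℝ)) := I2 N
      _ = b := by rw [div_self hNne, hℓ1]
  · -- surjective
    intro y
    suffices hsuf : Set.range x = Set.univ by
      have : y ∈ Set.range x := by rw [hsuf]; trivial
      exact this
    apply IsClopen.eq_univ
    · constructor
      · apply isClosed_of_closure_subset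
        intro w hw
        obtain ⟨v, hv_mem, hv_dist⟩ := Metric.mem_closure_iff.mp hw ρ hρ0
        obtain ⟨p, rfl⟩ := hv_mem
        obtain ⟨z, -, hz2⟩ := hB p w (le_of_lt (by rw [← dist_eq_norm]; exact hv_dist))
        exact ⟨z, hz2⟩
      · rw [Metric.isOpen_iff]
        rintro w ⟨p, rfl⟩
        refine ⟨ρ, hρ0, fun v hv => ?_⟩
        obtain ⟨z, -, hz2⟩ := hB p v (le_of_lt (by rw [← dist_eq_norm]; exact hv))
        exact ⟨z, hz2⟩
    · exact ⟨x 0, Set.mem_range_self 0⟩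


end
end

section
/- Let δ > 0, T > 0, V ≡ 0 and φ0(x) = −(|x|²+1)^{1+δ}/((2+2δ)T). Then the spatial component of the Hamiltonian flow is x(t,y) = y(1 − (t/T)(|y|²+1)^δ), and for every t ∈ (0,T) the map y ↦ x(t,y) is not injective on ℝ^n: every y with |y|² = (T/t)^{1/δ} − 1 satisfies x(t,y) = 0, and there exist at least two distinct such points y. -/
open MeasureTheory Real Filter Set

noncomputable section

lemma grad_phi0 {n : ℕ} (δ T : ℝ) (hδ : 0 < δ) (hT : 0 < T)
    (φ0 : Esp n → ℝ)
    (hφ0 : ∀ y, φ0 y = -(‖y‖ ^ 2 + 1) ^ (1 + δ) / ((2 + 2 * δ) * T))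
    (y : Esp n) :
    gradient φ0 y = (-(1/T) * (‖y‖ ^ 2 + 1) ^ δ) • y := by
  have hfun : φ0 = fun y : Esp n => (-1 / ((2 + 2 * δ) * T)) * (‖y‖ ^ 2 + 1) ^ (1 + δ) := by
    funext z; rw [hφ0 z]; ring
  subst hfun
  have hA : (0:ℝ) < ‖y‖ ^ 2 + 1 := by positivity
  have h1 : HasFDerivAt (fun y : Esp n => ‖y‖ ^ 2 + 1) (2 • (innerSL ℝ y)) y := by
    simpa using (hasFDerivAt_id y).norm_sq.add_const 1
  have h3 : HasDerivAt (fun s : ℝ => s ^ (1 + δ)) ((1 + δ) * (‖y‖ ^ 2 + 1) ^ δ) (‖y‖ ^ 2 + 1) := by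
    simpa using Real.hasDerivAt_rpow_const (p := 1 + δ) (Or.inl hA.ne')
  have h4 := h3.comp_hasFDerivAt y h1
  have h5 := h4.const_mul (-1 / ((2 + 2 * δ) * T))
  have h6 : HasFDerivAt (fun y : Esp n => (-1 / ((2 + 2 * δ) * T)) * (‖y‖ ^ 2 + 1) ^ (1 + δ))
      (innerSL ℝ ((-(1/T) * (‖y‖ ^ 2 + 1) ^ δ) • y)) y := by
    refine HasFDerivAt.congr_fderiv h5 ?_
    ext w
    simp only [ContinuousLinearMap.smul_apply, smul_eq_mul, innerSL_apply_apply,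
      real_inner_smul_left]
    have h2δ : (2 + 2 * δ) ≠ 0 := by positivity
    field_simp
    ring
  have hg := hasFDerivAt_iff_hasGradientAt.mp h6
  have hd : innerSL ℝ ((-(1/T) * (‖y‖ ^ 2 + 1) ^ δ) • y)
      = InnerProductSpace.toDual ℝ (Esp n) ((-(1/T) * (‖y‖ ^ 2 + 1) ^ δ) • y) := by
    ext; simp [InnerProductSpace.toDual_apply_apply]
  rw [hd, LinearIsometryEquiv.symm_apply_apply] at hg
  exact hg.gradient

lemma const_of_hasDerivAt_zero {F : Type*} [NormedAddCommGroup F] [NormedSpace ℝ F]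
    {f : ℝ → F} (h : ∀ t, HasDerivAt f 0 t) (a b : ℝ) : f a = f b := by
  have hdiff : Differentiable ℝ f := fun t => (h t).differentiableAt
  have hfd : ∀ t, fderiv ℝ f t = 0 := by
    intro t
    have := (h t).hasFDerivAt.fderiv
    rw [this]
    simp [ContinuousLinearMap.ext_iff]
  exact is_const_of_fderiv_eq_zero hdiff hfd a b

/-- **Example 2.4 (δ > 0).** With `V ≡ 0` and superquadratic initial phase
`φ0(y) = −(|y|²+1)^{1+δ}/((2+2δ)T)`, the spatial component of the Hamiltonian flow is
`x(t,y) = (1 − (t/T)(|y|²+1)^δ) y`; for every `t ∈ (0,T)` the map `y ↦ x(t,y)` is not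
injective: every `y` with `|y|² = (T/t)^{1/δ} − 1` is sent to `0`, and there are at least
two distinct such points. -/
theorem stmt6 {n : ℕ} (hn : 1 ≤ n) (δ T : ℝ) (hδ : 0 < δ) (hT : 0 < T)
    (φ0 : Esp n → ℝ)
    (hφ0 : ∀ y, φ0 y = -(‖y‖ ^ 2 + 1) ^ (1 + δ) / ((2 + 2 * δ) * T))
    (X Ξ : ℝ → Esp n → Esp n)
    (hflow : IsHamFlow (fun _ _ => (0:ℝ)) φ0 X Ξ) :
    (∀ t : ℝ, ∀ y, X t y = (1 - (t / T) * (‖y‖ ^ 2 + 1) ^ δ) • y) ∧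
    ∀ t ∈ Ioo (0:ℝ) T,
      (∀ y : Esp n, ‖y‖ ^ 2 = (T / t) ^ (1 / δ) - 1 → X t y = 0) ∧
      (∃ y₁ y₂ : Esp n, y₁ ≠ y₂ ∧ ‖y₁‖ ^ 2 = (T / t) ^ (1 / δ) - 1 ∧
        ‖y₂‖ ^ 2 = (T / t) ^ (1 / δ) - 1) ∧
      ¬ Function.Injective (X t) := by
  have hTne : T ≠ 0 := hT.ne'
  have hX : ∀ t : ℝ, ∀ y, X t y = (1 - (t / T) * (‖y‖ ^ 2 + 1) ^ δ) • y := by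
    intro t y
    have hΞ : ∀ s : ℝ, Ξ s y = Ξ 0 y := by
      intro s
      have : ∀ u : ℝ, HasDerivAt (fun s => Ξ s y) 0 u := by
        intro u
        have := hflow.dxi u y
        simpa [gradient_const] using this
      exact const_of_hasDerivAt_zero this s 0
    set c := Ξ 0 y with hc
    have hgrad : c = (-(1/T) * (‖y‖ ^ 2 + 1) ^ δ) • y := by
      rw [hc, hflow.init_xi y]
      exact grad_phi0 δ T hδ hT φ0 hφ0 y
    have hg : ∀ u : ℝ, HasDerivAt (fun s => X s y - s • c) 0 u := by
      intro u
      have h1 := (hflow.dx u y).sub ((hasDerivAt_id u).smul_const c)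
      simp [hΞ u] at h1
      exact h1
    have h2 := const_of_hasDerivAt_zero hg t 0
    simp only [zero_smul, sub_zero, hflow.init_x y] at h2
    have h3 : X t y = y + t • c := by
      exact sub_eq_iff_eq_add.mp h2
    rw [h3, hgrad, smul_smul]
    have hsc : 1 - (t / T) * (‖y‖ ^ 2 + 1) ^ δ = 1 + t * (-(1/T) * (‖y‖ ^ 2 + 1) ^ δ) := by
      field_simp
      ring
    rw [hsc, add_smul, one_smul]
  refine ⟨hX, ?_⟩
  intro t ⟨ht0, htT⟩
  have htne : t ≠ 0 := ht0.ne'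
  have hTt : 1 < T / t := (one_lt_div ht0).mpr htT
  have hTtpos : 0 < T / t := by positivity
  have h1lt : 1 < (T / t) ^ (1 / δ) :=
    (Real.one_lt_rpow_iff_of_pos hTtpos).mpr (Or.inl ⟨hTt, by positivity⟩)
  have hzero : ∀ y : Esp n, ‖y‖ ^ 2 = (T / t) ^ (1 / δ) - 1 → X t y = 0 := by
    intro y hy
    rw [hX t y]
    have hA1 : ‖y‖ ^ 2 + 1 = (T / t) ^ (1 / δ) := by rw [hy]; ring
    have hApow : (‖y‖ ^ 2 + 1) ^ δ = T / t := by
      rw [hA1, ← Real.rpow_mul hTtpos.le, one_div_mul_cancel hδ.ne', Real.rpow_one]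
    have hfac : 1 - (t / T) * (‖y‖ ^ 2 + 1) ^ δ = 0 := by
      rw [hApow]; field_simp; norm_num
    rw [hfac, zero_smul]
  refine ⟨hzero, ?_, ?_⟩
  · set r := Real.sqrt ((T / t) ^ (1 / δ) - 1) with hr
    have hrpos : 0 < r := Real.sqrt_pos.mpr (by linarith)
    have hr2 : r ^ 2 = (T / t) ^ (1 / δ) - 1 := Real.sq_sqrt (by linarith)
    set e : Esp n := EuclideanSpace.single (⟨0, hn⟩ : Fin n) (1:ℝ) with he
    have hne : ‖e‖ = 1 := by simp [he]
    have hene : e ≠ 0 := by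
      intro h; rw [h] at hne; simp at hne
    refine ⟨r • e, (-r) • e, ?_, ?_, ?_⟩
    · intro h
      have : (r - (-r)) • e = 0 := by rw [sub_smul, h, sub_self]
      rcases smul_eq_zero.mp this with h' | h'
      · have : r = 0 := by linarith [h', abs_nonneg r]
        exact hrpos.ne' this
      · exact hene h'
    · rw [norm_smul, hne]; simp [abs_of_pos hrpos, hr2]
    · rw [norm_smul, hne]; simp [abs_of_pos hrpos, hr2]
  · intro hinj
    set r := Real.sqrt ((T / t) ^ (1 / δ) - 1) with hr
    have hrpos : 0 < r := Real.sqrt_pos.mpr (by linarith)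
    have hr2 : r ^ 2 = (T / t) ^ (1 / δ) - 1 := Real.sq_sqrt (by linarith)
    set e : Esp n := EuclideanSpace.single (⟨0, hn⟩ : Fin n) (1:ℝ) with he
    have hne : ‖e‖ = 1 := by simp [he]
    have hene : e ≠ 0 := by
      intro h; rw [h] at hne; simp at hne
    have hn1 : ‖r • e‖ ^ 2 = (T / t) ^ (1 / δ) - 1 := by
      rw [norm_smul, hne]; simp [abs_of_pos hrpos, hr2]
    have hn2 : ‖(-r) • e‖ ^ 2 = (T / t) ^ (1 / δ) - 1 := by
      rw [norm_smul, hne]; simp [abs_of_pos hrpos, hr2]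
    have heq : X t (r • e) = X t ((-r) • e) := by
      rw [hzero _ hn1, hzero _ hn2]
    have := hinj heq
    have h2 : (r - (-r)) • e = 0 := by rw [sub_smul, this, sub_self]
    rcases smul_eq_zero.mp h2 with h' | h'
    · linarith
    · exact hene h'


end
end

section
/- Let f : ℝ → ℝ be continuous, g : [0,T] → ℝ continuous, λ ∈ ℝ, a ∈ ℂ, and let A : [0,T] → ℂ be differentiable with A'(t) = −iλ f(g(t)|A(t)|²) A(t) for all t ∈ [0,T] and A(0) = a. Then |A(t)| = |a| for all t ∈ [0,T], and A(t) = a·exp(−iλ ∫_0^t f(g(s)|a|²) ds). -/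
open MeasureTheory Real Filter Set

noncomputable section

/-- **The ODE along rays.** If `A' (t) = −iλ f(g(t)|A(t)|²)A(t)` on `[0,T]` with
`A(0) = a`, `f` continuous and `g` continuous on `[0,T]`, then `|A(t)| = |a|` and
`A(t) = a·exp(−iλ ∫_0^t f(g(s)|a|²) ds)` for all `t ∈ [0,T]`. -/
theorem stmt11 (T : ℝ) (f g : ℝ → ℝ) (hf : Continuous f)
    (hg : ContinuousOn g (Icc (0:ℝ) T)) (lam : ℝ) (a : ℂ) (A : ℝ → ℂ)
    (hA : ∀ t ∈ Icc (0:ℝ) T, HasDerivWithinAt A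
      (-(Complex.I) * (lam : ℂ) * ((f (g t * ‖A t‖ ^ 2) : ℝ) : ℂ) * A t)
      (Icc (0:ℝ) T) t)
    (h0 : A 0 = a) :
    ∀ t ∈ Icc (0:ℝ) T, ‖A t‖ = ‖a‖ ∧
      A t = a * Complex.exp (-(Complex.I) * (lam : ℂ)
        * (((∫ s in (0:ℝ)..t, f (g s * ‖a‖ ^ 2)) : ℝ) : ℂ)) := by
  intro t ht
  have hT : (0:ℝ) ≤ T := le_trans ht.1 ht.2
  have h0m : (0:ℝ) ∈ Icc (0:ℝ) T := ⟨le_refl 0, hT⟩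
  have hconv : Convex ℝ (Icc (0:ℝ) T) := convex_Icc 0 T
  set c : ℝ → ℂ := fun t => -(Complex.I) * (lam : ℂ) * ((f (g t * ‖A t‖ ^ 2) : ℝ) : ℂ) with hc
  have hcre : ∀ t, (c t).re = 0 := by intro t; simp [hc]
  -- Step 1: norm constancy
  have hN : ∀ τ ∈ Icc (0:ℝ) T,
      HasDerivWithinAt (fun s => (A s).re ^ 2 + (A s).im ^ 2) 0 (Icc (0:ℝ) T) τ := by
    intro τ hτ
    have hAτ := hA τ hτ
    have hu : HasDerivWithinAt (fun s => (A s).re) ((c τ * A τ).re) (Icc (0:ℝ) T) τ :=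
      Complex.reCLM.hasFDerivAt.comp_hasDerivWithinAt τ hAτ
    have hv : HasDerivWithinAt (fun s => (A s).im) ((c τ * A τ).im) (Icc (0:ℝ) T) τ :=
      Complex.imCLM.hasFDerivAt.comp_hasDerivWithinAt τ hAτ
    have key : HasDerivWithinAt (fun s => (A s).re ^ 2 + (A s).im ^ 2)
        (2 * (A τ).re * (c τ * A τ).re + 2 * (A τ).im * (c τ * A τ).im)
        (Icc (0:ℝ) T) τ := by
      have h1 := ((hu.pow 2).add (hv.pow 2))
      refine h1.congr_deriv ?_; simp
    have heq : (2 * (A τ).re * (c τ * A τ).re + 2 * (A τ).im * (c τ * A τ).im) = 0 := by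
      simp only [Complex.mul_re, Complex.mul_im, hcre τ]; ring
    rwa [heq] at key
  have hNsq : ∀ s, ‖A s‖ ^ 2 = (A s).re ^ 2 + (A s).im ^ 2 := by
    intro s
    simp [Complex.sq_norm, Complex.normSq_apply]; ring
  have hnormconst : ∀ τ ∈ Icc (0:ℝ) T, ‖A τ‖ = ‖a‖ := by
    intro τ hτ
    have h := hconv.norm_image_sub_le_of_norm_hasDerivWithin_le (C := 0) hN
      (fun x _ => by simp) h0m hτ
    simp only [zero_mul, norm_le_zero_iff, sub_eq_zero] at h
    have : ‖A τ‖ ^ 2 = ‖a‖ ^ 2 := by rw [hNsq, h, ← hNsq, h0]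
    calc ‖A τ‖ = Real.sqrt (‖A τ‖ ^ 2) := (Real.sqrt_sq (norm_nonneg _)).symm
      _ = Real.sqrt (‖a‖ ^ 2) := by rw [this]
      _ = ‖a‖ := Real.sqrt_sq (norm_nonneg _)
  -- Step 2: extend the integrand continuously
  set h : ℝ → ℝ := fun s => f (g (min (max s 0) T) * ‖a‖ ^ 2) with hh
  have hclamp : ∀ s ∈ Icc (0:ℝ) T, min (max s 0) T = s := by
    intro s hs; rw [max_eq_left hs.1, min_eq_left hs.2]
  have hhcont : Continuous h := by
    apply hf.comp
    apply Continuous.mul _ continuous_const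
    apply hg.comp_continuous
    · exact (continuous_id.max continuous_const).min continuous_const
    · intro x
      exact ⟨le_min (le_max_right x 0) hT, min_le_right _ _⟩
  set θ : ℝ → ℝ := fun t => ∫ s in (0:ℝ)..t, h s with hθ
  have hθd : ∀ τ : ℝ, HasDerivAt θ (h τ) τ := fun τ =>
    intervalIntegral.integral_hasDerivAt_right (hhcont.intervalIntegrable 0 τ)
      (hhcont.stronglyMeasurableAtFilter _ _) hhcont.continuousAt
  -- the exponential factor
  set E : ℝ → ℂ := fun t => Complex.exp (Complex.I * (lam : ℂ) * ((θ t : ℝ) : ℂ)) with hE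
  have hEd : ∀ τ : ℝ, HasDerivAt E
      (Complex.I * (lam : ℂ) * ((h τ : ℝ) : ℂ) * E τ) τ := by
    intro τ
    have h1 : HasDerivAt (fun t => Complex.I * (lam : ℂ) * ((θ t : ℝ) : ℂ))
        (Complex.I * (lam : ℂ) * ((h τ : ℝ) : ℂ)) τ :=
      ((hθd τ).ofReal_comp).const_mul (Complex.I * (lam : ℂ))
    have := h1.cexp
    convert this using 1
    ring
  -- B is constant
  have hB : ∀ τ ∈ Icc (0:ℝ) T,
      HasDerivWithinAt (fun s => A s * E s) 0 (Icc (0:ℝ) T) τ := by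
    intro τ hτ
    have hAd := hA τ hτ
    have := hAd.mul ((hEd τ).hasDerivWithinAt)
    refine this.congr_deriv ?_
    have hfg : f (g τ * ‖A τ‖ ^ 2) = h τ := by
      rw [hh]; simp only [hclamp τ hτ, hnormconst τ hτ]
    rw [hfg]
    ring
  have hBconst : ∀ τ ∈ Icc (0:ℝ) T, A τ * E τ = a := by
    intro τ hτ
    have hle := hconv.norm_image_sub_le_of_norm_hasDerivWithin_le (C := 0) hB
      (fun x _ => by simp) h0m hτ
    simp only [zero_mul, norm_le_zero_iff, sub_eq_zero] at hle
    rw [hle, h0, hE]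
    have : θ 0 = 0 := by simp [hθ]
    simp [this]
  -- conclude
  refine ⟨hnormconst t ht, ?_⟩
  have hint : (∫ s in (0:ℝ)..t, f (g s * ‖a‖ ^ 2)) = θ t := by
    rw [hθ]
    apply intervalIntegral.integral_congr
    intro s hs
    rw [uIcc_of_le ht.1] at hs
    rw [hh]; simp only [hclamp s ⟨hs.1, hs.2.trans ht.2⟩]
  rw [hint]
  have hBt := hBconst t ht
  have hEne : E t ≠ 0 := Complex.exp_ne_zero _
  simp only [hE] at hBt ⊢
  rw [← hBt, mul_assoc, ← Complex.exp_add]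
  have hz : Complex.I * (lam:ℂ) * ((θ t : ℝ):ℂ) + -(Complex.I) * (lam:ℂ) * ((θ t : ℝ):ℂ) = 0 := by
    ring
  rw [hz, Complex.exp_zero, mul_one]


end
end

section
/- Fix n ≥ 1 and a C¹ function f : ℝ → ℝ with f' > 0. For a1, a2 ∈ ℝ, v ∈ ℝ^n and ξ ∈ ℝ^n, let A be the (n+2) × (n+2) real matrix with block form: upper-left 2×2 block (v·ξ)I₂, upper-right 2×n block with rows (a1/2)ξᵀ and (a2/2)ξᵀ, lower-left n×2 block with columns 2f'(a1²+a2²)a1 ξ and 2f'(a1²+a2²)a2 ξ, and lower-right n×n block (v·ξ)I_n. Let S be the block-diagonal matrix diag(I₂, (1/(4f'(a1²+a2²)))I_n). Then S is symmetric positive definite and the matrix S·A is symmetric. -/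
open MeasureTheory Real Filter Set

noncomputable section

/-- **The symmetrizer.** For `f` of class `C¹` with `f' > 0`, the matrix
`S = diag(I₂, (1/(4f'(a1²+a2²)))I_n)` is symmetric positive definite and symmetrizes the
matrix `A(u,ξ)` of the quasilinear system: `S·A` is symmetric. -/
theorem stmt13 (n : ℕ) (hn : 1 ≤ n) (f : ℝ → ℝ) (hf : ContDiff ℝ 1 f)
    (hf' : ∀ y, 0 < deriv f y)
    (a1 a2 : ℝ) (v ξ : Fin n → ℝ)
    (A S : Matrix (Fin 2 ⊕ Fin n) (Fin 2 ⊕ Fin n) ℝ)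
    (hA : A = Matrix.fromBlocks
      ((∑ i, v i * ξ i) • (1 : Matrix (Fin 2) (Fin 2) ℝ))
      (Matrix.of fun (i : Fin 2) (j : Fin n) =>
        (if i = 0 then a1 else a2) / 2 * ξ j)
      (Matrix.of fun (i : Fin n) (j : Fin 2) =>
        2 * deriv f (a1 ^ 2 + a2 ^ 2) * (if j = 0 then a1 else a2) * ξ i)
      ((∑ i, v i * ξ i) • (1 : Matrix (Fin n) (Fin n) ℝ)))
    (hS : S = Matrix.fromBlocks 1 0 0
      ((1 / (4 * deriv f (a1 ^ 2 + a2 ^ 2))) • (1 : Matrix (Fin n) (Fin n) ℝ))) :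
    S.IsSymm ∧ S.PosDef ∧ (S * A).IsSymm := by

  have hd : 0 < deriv f (a1 ^ 2 + a2 ^ 2) := hf' _
  have hd' : deriv f (a1 ^ 2 + a2 ^ 2) ≠ 0 := ne_of_gt hd
  have hc : 0 < 1 / (4 * deriv f (a1 ^ 2 + a2 ^ 2)) := by positivity
  have hSdiag : S = Matrix.diagonal (Sum.elim (fun _ : Fin 2 => (1:ℝ))
      (fun _ : Fin n => 1 / (4 * deriv f (a1 ^ 2 + a2 ^ 2)))) := by
    rw [hS]
    ext (i|i) (j|j) <;>
      simp [Matrix.one_apply, Matrix.diagonal_apply, Sum.inl.injEq, Sum.inr.injEq] <;>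
      split <;> simp
  refine ⟨?_, ?_, ?_⟩
  · rw [hSdiag]; exact Matrix.isSymm_diagonal _
  · rw [hSdiag]
    refine Matrix.posDef_diagonal_iff.mpr ?_
    rintro (i|i) <;> simp [hc, hd]
  · rw [hS, hA, Matrix.fromBlocks_multiply]
    rw [Matrix.IsSymm, Matrix.fromBlocks_transpose]
    ext (i|i) (j|j) <;>
      simp [Matrix.transpose_apply, Matrix.mul_apply, Matrix.one_apply, Matrix.smul_apply] <;>
      split_ifs <;> field_simp <;> ring

end
end
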